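/- arXiv:1505.02199 — 7 statements merged into one kernel-verified Lean document; each statement's English description precedes it below -/
import Mathlib

section
/- Let W be a word of length n over a 4-letter alphabet, with n ≥ d+2 ≥ 4, and let C(W,d) be the set of words at Hamming distance at most d from W that are correlated with W (i.e., share a nonempty prefix-suffix overlap with W in either order, including equality). Then |C(W,d)| ≥ 2·∑_{i=0}^{d-1} C(n-1,i)·3^i − ∑_{i=0}^{d-2} C(n-2,i)·3^i. -/
section Aux

open Finset

variable {α β : Type*} [Fintype α] [DecidableEq α] [Fintype β] [DecidableEq β]

/-- number of words whose difference-set with `w` is exactly `s`. -/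
lemma fiber_card (w : α → β) (s : Finset α) :
    (univ.filter fun g : α → β => (univ.filter fun i => g i ≠ w i) = s).card
      = (Fintype.card β - 1) ^ s.card := by
  have hset : (univ.filter fun g : α → β => (univ.filter fun i => g i ≠ w i) = s)
      = Fintype.piFinset (fun i => if i ∈ s then univ.erase (w i) else {w i}) := by
    ext g
    simp only [mem_filter, mem_univ, true_and, Fintype.mem_piFinset]
    constructor
    · intro h i
      by_cases hi : i ∈ s
      · simp only [hi, if_true, mem_erase, mem_univ, and_true]
        rw [← h] at hi; simpa using hi
      · simp only [hi, if_false, mem_singleton]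
        rw [← h] at hi; simpa using hi
    · intro h
      ext i
      have := h i
      by_cases hi : i ∈ s
      · simp only [hi, if_true, mem_erase, mem_univ, and_true] at this
        simp [hi, this]
      · simp only [hi, if_false, mem_singleton] at this
        simp [hi, this]
  rw [hset, Fintype.card_piFinset]
  have : ∀ i : α, #(if i ∈ s then univ.erase (w i) else ({w i} : Finset β))
      = if i ∈ s then (Fintype.card β - 1) else 1 := by
    intro i
    by_cases hi : i ∈ s <;> simp [hi, Finset.card_erase_of_mem, Finset.card_univ]
  rw [Finset.prod_congr rfl (fun i _ => this i), Finset.prod_ite_mem, univ_inter,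
    Finset.prod_const]

lemma ball_card (w : α → β) (d : ℕ) :
    (univ.filter fun g : α → β => hammingDist g w ≤ d).card
      = ∑ i ∈ range (d + 1), (Fintype.card α).choose i * (Fintype.card β - 1) ^ i := by
  have hmaps : ∀ g ∈ (univ.filter fun g : α → β => hammingDist g w ≤ d),
      (univ.filter fun i => g i ≠ w i) ∈ univ.powerset.filter fun s => s.card ≤ d := by
    intro g hg
    simp only [mem_filter, mem_univ, true_and, mem_powerset] at hg ⊢
    exact ⟨subset_univ _, hg⟩
  rw [Finset.card_eq_sum_card_fiberwise hmaps]
  have hfib : ∀ s ∈ univ.powerset.filter (fun s => s.card ≤ d),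
      ((univ.filter fun g : α → β => hammingDist g w ≤ d).filter
          (fun g => (univ.filter fun i => g i ≠ w i) = s)).card
        = (Fintype.card β - 1) ^ s.card := by
    intro s hs
    simp only [mem_filter, mem_powerset] at hs
    rw [Finset.filter_filter]
    rw [← fiber_card w s]
    congr 1
    apply Finset.filter_congr
    intro g _
    constructor
    · rintro ⟨_, h⟩; exact h
    · intro h
      refine ⟨?_, h⟩
      show (univ.filter fun i => g i ≠ w i).card ≤ d
      rw [h]; exact hs.2
  rw [Finset.sum_congr rfl hfib]
  -- now group by cardinality
  have := Finset.sum_fiberwise_of_maps_to (s := univ.powerset.filter fun s : Finset α => s.card ≤ d)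
    (t := range (d + 1)) (g := fun s => s.card)
    (fun s hs => by simp only [mem_filter] at hs; simp [Nat.lt_succ_iff, hs.2])
    (fun s => (Fintype.card β - 1) ^ s.card)
  rw [← this]
  refine Finset.sum_congr rfl fun i hi => ?_
  simp only [mem_range, Nat.lt_succ_iff] at hi
  have hfilter : ((univ.powerset.filter fun s : Finset α => s.card ≤ d).filter
      fun s => s.card = i) = powersetCard i (univ : Finset α) := by
    rw [Finset.powersetCard_eq_filter, Finset.filter_filter]
    apply Finset.filter_congr
    intro s _
    constructor
    · rintro ⟨_, h⟩; exact h
    · intro h; exact ⟨h ▸ hi, h⟩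
  rw [hfilter]
  rw [Finset.sum_congr rfl (fun s hs => by
    rw [(Finset.mem_powersetCard.mp hs).2])]
  rw [Finset.sum_const, Finset.card_powersetCard, Finset.card_univ, smul_eq_mul]

lemma dist_split (i₀ : α) (g w : α → β) :
    hammingDist g w = (if g i₀ = w i₀ then 0 else 1)
      + hammingDist (fun j : {i // i ≠ i₀} => g j) (fun j : {i // i ≠ i₀} => w j) := by
  show (univ.filter fun i => g i ≠ w i).card = _ +
    (univ.filter fun j : {i // i ≠ i₀} => g j ≠ w j).card
  rw [Finset.card_filter, Finset.card_filter]
  rw [← Finset.add_sum_erase (univ : Finset α) _ (mem_univ i₀)]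
  congr 1
  · by_cases h : g i₀ = w i₀ <;> simp [h]
  · rw [← Finset.filter_ne' univ i₀,
      Finset.sum_subtype (p := fun i => i ≠ i₀) _ (by simp) (fun i => if g i ≠ w i then 1 else 0)]

/-- generic restriction bijection: pinning coordinate `i₀` to `c`. -/
lemma restrict_card (i₀ : α) (c : β) (Q : ({i // i ≠ i₀} → β) → Prop) [DecidablePred Q] :
    (univ.filter fun g : α → β => Q (fun j => g j) ∧ g i₀ = c).card
      = (univ.filter fun h : {i // i ≠ i₀} → β => Q h).card := by
  apply Finset.card_bij' (i := fun g _ => fun j : {i // i ≠ i₀} => g j)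
    (j := fun h _ => fun i => if hi : i = i₀ then c else h ⟨i, hi⟩)
  · intro g hg
    simp only [mem_filter, mem_univ, true_and] at hg ⊢
    exact hg.1
  · intro h hh
    simp only [mem_filter, mem_univ, true_and] at hh ⊢
    refine ⟨?_, by simp⟩
    have he : (fun j : {i // i ≠ i₀} =>
        (fun i => if hi : i = i₀ then c else h ⟨i, hi⟩) (j : α)) = h := by
      funext j
      show (if hi : (j : α) = i₀ then c else h ⟨(j : α), hi⟩) = h j
      rw [dif_neg j.2]
    rw [he]; exact hh
  · intro g hg
    simp only [mem_filter, mem_univ, true_and] at hg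
    funext i
    by_cases hi : i = i₀
    · show (if hi' : i = i₀ then c else g i) = g i
      rw [dif_pos hi, hi, hg.2]
    · show (if hi' : i = i₀ then c else g i) = g i
      rw [dif_neg hi]
  · intro h _
    funext j
    show (if hi : (j : α) = i₀ then c else h ⟨(j : α), hi⟩) = h j
    rw [dif_neg j.2]

lemma pinned_card_eq (w : α → β) (i₀ : α) (d : ℕ) :
    (univ.filter fun g : α → β => hammingDist g w ≤ d ∧ g i₀ = w i₀).card
      = ∑ i ∈ range (d + 1), (Fintype.card α - 1).choose i * (Fintype.card β - 1) ^ i := by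
  have h1 : (univ.filter fun g : α → β => hammingDist g w ≤ d ∧ g i₀ = w i₀)
      = (univ.filter fun g : α → β =>
          (hammingDist (fun j : {i // i ≠ i₀} => g j) (fun j => w j) ≤ d) ∧ g i₀ = w i₀) := by
    apply Finset.filter_congr
    intro g _
    constructor
    · rintro ⟨ha, hb⟩
      refine ⟨?_, hb⟩
      rw [dist_split i₀ g w, if_pos hb] at ha
      omega
    · rintro ⟨ha, hb⟩
      refine ⟨?_, hb⟩
      rw [dist_split i₀ g w, if_pos hb]
      omega
  rw [h1]
  have h2 := restrict_card i₀ (w i₀)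
    (fun h : {i // i ≠ i₀} → β => hammingDist h (fun j => w j) ≤ d)
  rw [ball_card] at h2
  have h3 : Fintype.card {i // i ≠ i₀} = Fintype.card α - 1 := by
    rw [Fintype.card_subtype_compl, Fintype.card_subtype_eq]
  rw [h3] at h2
  exact h2

lemma pinned_card_ne (w : α → β) (i₀ : α) (c : β) (hc : c ≠ w i₀) (d : ℕ) (hd : 1 ≤ d) :
    (univ.filter fun g : α → β => hammingDist g w ≤ d ∧ g i₀ = c).card
      = ∑ i ∈ range d, (Fintype.card α - 1).choose i * (Fintype.card β - 1) ^ i := by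
  have h1 : (univ.filter fun g : α → β => hammingDist g w ≤ d ∧ g i₀ = c)
      = (univ.filter fun g : α → β =>
          (hammingDist (fun j : {i // i ≠ i₀} => g j) (fun j => w j) ≤ d - 1) ∧ g i₀ = c) := by
    apply Finset.filter_congr
    intro g _
    constructor
    · rintro ⟨ha, hb⟩
      refine ⟨?_, hb⟩
      rw [dist_split i₀ g w, if_neg (by rw [hb]; exact hc)] at ha
      omega
    · rintro ⟨ha, hb⟩
      refine ⟨?_, hb⟩
      rw [dist_split i₀ g w, if_neg (by rw [hb]; exact hc)]
      omega
  rw [h1]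
  have h2 := restrict_card i₀ c
    (fun h : {i // i ≠ i₀} → β => hammingDist h (fun j => w j) ≤ d - 1)
  rw [ball_card] at h2
  have h3 : Fintype.card {i // i ≠ i₀} = Fintype.card α - 1 := by
    rw [Fintype.card_subtype_compl, Fintype.card_subtype_eq]
  rw [h3, Nat.sub_add_cancel hd] at h2
  exact h2

lemma pinned2_card_eq (w : α → β) (i₀ i₁ : α) (hne : i₁ ≠ i₀) (d : ℕ) :
    (univ.filter fun g : α → β => hammingDist g w ≤ d ∧ g i₀ = w i₀ ∧ g i₁ = w i₁).card
      = ∑ i ∈ range (d + 1), (Fintype.card α - 2).choose i * (Fintype.card β - 1) ^ i := by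
  have h5 : Fintype.card α - 1 - 1 = Fintype.card α - 2 := by omega
  have h1 : (univ.filter fun g : α → β => hammingDist g w ≤ d ∧ g i₀ = w i₀ ∧ g i₁ = w i₁)
      = (univ.filter fun g : α → β =>
          ((hammingDist (fun j : {i // i ≠ i₀} => g j) (fun j => w j) ≤ d
            ∧ g i₁ = w i₁) ∧ g i₀ = w i₀)) := by
    apply Finset.filter_congr
    intro g _
    constructor
    · rintro ⟨ha, hb, hcc⟩
      refine ⟨⟨?_, hcc⟩, hb⟩
      rw [dist_split i₀ g w, if_pos hb] at ha
      omega
    · rintro ⟨⟨ha, hcc⟩, hb⟩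
      refine ⟨?_, hb, hcc⟩
      rw [dist_split i₀ g w, if_pos hb]
      omega
  rw [h1]
  have h2 := restrict_card i₀ (w i₀)
    (fun h : {i // i ≠ i₀} → β =>
      hammingDist h (fun j => w j) ≤ d ∧ h ⟨i₁, hne⟩ = w i₁)
  have h3 := pinned_card_eq (fun j : {i // i ≠ i₀} => w j) (⟨i₁, hne⟩ : {i // i ≠ i₀}) d
  have h4 : Fintype.card {i // i ≠ i₀} = Fintype.card α - 1 := by
    rw [Fintype.card_subtype_compl, Fintype.card_subtype_eq]
  rw [h4] at h3
  rw [h5] at h3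
  have h3' : (univ.filter fun h : {i // i ≠ i₀} → β =>
      hammingDist h (fun j => w j) ≤ d ∧ h ⟨i₁, hne⟩ = w i₁).card
        = ∑ i ∈ range (d + 1), (Fintype.card α - 2).choose i * (Fintype.card β - 1) ^ i := h3
  exact h2.trans h3'

lemma pinned2_card_ne (w : α → β) (i₀ i₁ : α) (hne : i₁ ≠ i₀) (c₀ c₁ : β)
    (hc₀ : c₀ ≠ w i₀) (hc₁ : c₁ ≠ w i₁) (d : ℕ) (hd : 2 ≤ d) :
    (univ.filter fun g : α → β => hammingDist g w ≤ d ∧ g i₀ = c₀ ∧ g i₁ = c₁).card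
      = ∑ i ∈ range (d - 1), (Fintype.card α - 2).choose i * (Fintype.card β - 1) ^ i := by
  have h5 : Fintype.card α - 1 - 1 = Fintype.card α - 2 := by omega
  have hd1 : 1 ≤ d - 1 := by omega
  have h1 : (univ.filter fun g : α → β => hammingDist g w ≤ d ∧ g i₀ = c₀ ∧ g i₁ = c₁)
      = (univ.filter fun g : α → β =>
          ((hammingDist (fun j : {i // i ≠ i₀} => g j) (fun j => w j) ≤ d - 1
            ∧ g i₁ = c₁) ∧ g i₀ = c₀)) := by
    apply Finset.filter_congr
    intro g _
    constructor
    · rintro ⟨ha, hb, hcc⟩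
      refine ⟨⟨?_, hcc⟩, hb⟩
      rw [dist_split i₀ g w, if_neg (by rw [hb]; exact hc₀)] at ha
      omega
    · rintro ⟨⟨ha, hcc⟩, hb⟩
      refine ⟨?_, hb, hcc⟩
      rw [dist_split i₀ g w, if_neg (by rw [hb]; exact hc₀)]
      omega
  rw [h1]
  have h2 := restrict_card i₀ c₀
    (fun h : {i // i ≠ i₀} → β =>
      hammingDist h (fun j => w j) ≤ d - 1 ∧ h ⟨i₁, hne⟩ = c₁)
  have h3 := pinned_card_ne (fun j : {i // i ≠ i₀} => w j) (⟨i₁, hne⟩ : {i // i ≠ i₀})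
    c₁ hc₁ (d - 1) hd1
  have h4 : Fintype.card {i // i ≠ i₀} = Fintype.card α - 1 := by
    rw [Fintype.card_subtype_compl, Fintype.card_subtype_eq]
  rw [h4] at h3
  rw [h5] at h3
  have h3' : (univ.filter fun h : {i // i ≠ i₀} → β =>
      hammingDist h (fun j => w j) ≤ d - 1 ∧ h ⟨i₁, hne⟩ = c₁).card
        = ∑ i ∈ range (d - 1), (Fintype.card α - 2).choose i * (Fintype.card β - 1) ^ i := h3
  exact h2.trans h3'

end Aux

/-- `prefEqSuff X Y k` : the prefix of `X` of length `k` equals the suffix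
of `Y` of length `k`, i.e. `X i = Y (n - k + i)` for all `i < k`. -/
def prefEqSuff {n : ℕ} (X Y : Fin n → Fin 4) (k : ℕ) : Prop :=
  ∀ i : Fin n, (i : ℕ) < k → ∀ j : Fin n, (j : ℕ) = n - k + i → X i = Y j

/-- Two words of length `n` are correlated if some nonempty prefix of one of them
equals a suffix of the other (including full overlap, i.e. equality). -/
def correlated {n : ℕ} (X Y : Fin n → Fin 4) : Prop :=
  ∃ k : ℕ, 0 < k ∧ k ≤ n ∧ (prefEqSuff X Y k ∨ prefEqSuff Y X k)

open Finset in
open scoped Classical in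
/-- Lower bound on the number of words at Hamming distance at most `d` from `W`
that are correlated with `W`. -/
theorem stmt1 (n d : ℕ) (hd : 2 ≤ d) (hn : d + 2 ≤ n) (W : Fin n → Fin 4) :
    2 * ∑ i ∈ range d, ((n - 1).choose i : ℤ) * 3 ^ i
        - ∑ i ∈ range (d - 1), ((n - 2).choose i : ℤ) * 3 ^ i ≤
      ((univ.filter (fun W' : Fin n → Fin 4 =>
          hammingDist W' W ≤ d ∧ correlated W' W)).card : ℤ) := by
  have h0 : 0 < n := by omega
  have h1' : n - 1 < n := by omega
  obtain ⟨e, rfl⟩ : ∃ e, d = e + 1 := ⟨d - 1, by omega⟩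
  have he1 : 1 ≤ e := by omega
  have hd1 : 1 ≤ e + 1 := by omega
  have pas : (n - 1).choose (e + 1) = (n - 2).choose e + (n - 2).choose (e + 1) := by
    have hn2 : n - 1 = (n - 2) + 1 := by omega
    rw [hn2, Nat.choose_succ_succ]
  simp only [Nat.add_sub_cancel]
  let i0 : Fin n := ⟨0, h0⟩
  let i1 : Fin n := ⟨n - 1, h1'⟩
  have hne10 : i1 ≠ i0 := by
    intro h
    have := congrArg Fin.val h
    simp only [i0, i1] at this
    omega
  have hcorA : ∀ g : Fin n → Fin 4, g i0 = W i1 → correlated g W := by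
    intro g hg
    refine ⟨1, one_pos, by omega, Or.inl ?_⟩
    intro i hi j hj
    have hiv : (i : ℕ) = 0 := by omega
    have hi' : i = i0 := Fin.ext hiv
    have hj' : j = i1 := by
      apply Fin.ext
      show (j : ℕ) = n - 1
      omega
    rw [hi', hj', hg]
  have hcorB : ∀ g : Fin n → Fin 4, g i1 = W i0 → correlated g W := by
    intro g hg
    refine ⟨1, one_pos, by omega, Or.inr ?_⟩
    intro i hi j hj
    have hiv : (i : ℕ) = 0 := by omega
    have hi' : i = i0 := Fin.ext hiv
    have hj' : j = i1 := by
      apply Fin.ext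
      show (j : ℕ) = n - 1
      omega
    rw [hi', hj', hg]
  have hsub : (univ.filter fun g : Fin n → Fin 4 => hammingDist g W ≤ e + 1 ∧ g i0 = W i1)
      ∪ (univ.filter fun g : Fin n → Fin 4 => hammingDist g W ≤ e + 1 ∧ g i1 = W i0)
      ⊆ univ.filter (fun W' : Fin n → Fin 4 =>
          hammingDist W' W ≤ e + 1 ∧ correlated W' W) := by
    intro g hg
    simp only [mem_union, mem_filter, mem_univ, true_and] at hg ⊢
    rcases hg with ⟨ha, hb⟩ | ⟨ha, hb⟩
    · exact ⟨ha, hcorA g hb⟩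
    · exact ⟨ha, hcorB g hb⟩
  have e2 := Finset.card_le_card hsub
  have e1 := Finset.card_union_add_card_inter
    (univ.filter fun g : Fin n → Fin 4 => hammingDist g W ≤ e + 1 ∧ g i0 = W i1)
    (univ.filter fun g : Fin n → Fin 4 => hammingDist g W ≤ e + 1 ∧ g i1 = W i0)
  have hABset : (univ.filter fun g : Fin n → Fin 4 => hammingDist g W ≤ e + 1 ∧ g i0 = W i1)
      ∩ (univ.filter fun g : Fin n → Fin 4 => hammingDist g W ≤ e + 1 ∧ g i1 = W i0)
      = univ.filter (fun g : Fin n → Fin 4 =>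
          hammingDist g W ≤ e + 1 ∧ g i0 = W i1 ∧ g i1 = W i0) := by
    ext g
    simp only [mem_inter, mem_filter, mem_univ, true_and]
    tauto
  rw [hABset] at e1
  -- integer facts for the final computation
  have ha0 : (0 : ℤ) ≤ ((n - 2).choose e : ℤ) := Int.natCast_nonneg _
  have hb0 : (0 : ℤ) ≤ ((n - 2).choose (e + 1) : ℤ) := Int.natCast_nonneg _
  have h3e : (0 : ℤ) ≤ 3 ^ e := by positivity
  have hpow : (3 : ℤ) ^ (e + 1) = 3 * 3 ^ e := by ring
  by_cases hW : W i0 = W i1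
  · -- ends equal
    rw [hW] at e1 e2
    have cA : (univ.filter fun g : Fin n → Fin 4 =>
        hammingDist g W ≤ e + 1 ∧ g i0 = W i1).card
          = ∑ i ∈ range (e + 2), (n - 1).choose i * 3 ^ i := by
      have h := pinned_card_eq W i0 (e + 1)
      rw [hW] at h
      simpa using h
    have cB : (univ.filter fun g : Fin n → Fin 4 =>
        hammingDist g W ≤ e + 1 ∧ g i1 = W i1).card
          = ∑ i ∈ range (e + 2), (n - 1).choose i * 3 ^ i := by
      have h := pinned_card_eq W i1 (e + 1)
      simpa using h
    have cAB : (univ.filter fun g : Fin n → Fin 4 =>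
        hammingDist g W ≤ e + 1 ∧ g i0 = W i1 ∧ g i1 = W i1).card
          = ∑ i ∈ range (e + 2), (n - 2).choose i * 3 ^ i := by
      have h := pinned2_card_eq W i0 i1 hne10 (e + 1)
      rw [hW] at h
      simpa using h
    rw [cA, cB, cAB] at e1
    have e1z : ((((univ.filter fun g : Fin n → Fin 4 =>
          hammingDist g W ≤ e + 1 ∧ g i0 = W i1)
        ∪ (univ.filter fun g : Fin n → Fin 4 =>
          hammingDist g W ≤ e + 1 ∧ g i1 = W i1)).card : ℤ))
          + ∑ i ∈ range (e + 2), ((n - 2).choose i : ℤ) * 3 ^ i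
        = ∑ i ∈ range (e + 2), ((n - 1).choose i : ℤ) * 3 ^ i
          + ∑ i ∈ range (e + 2), ((n - 1).choose i : ℤ) * 3 ^ i := by
      exact_mod_cast e1
    have e2z : ((((univ.filter fun g : Fin n → Fin 4 =>
          hammingDist g W ≤ e + 1 ∧ g i0 = W i1)
        ∪ (univ.filter fun g : Fin n → Fin 4 =>
          hammingDist g W ≤ e + 1 ∧ g i1 = W i1)).card : ℤ))
        ≤ ((univ.filter (fun W' : Fin n → Fin 4 =>
          hammingDist W' W ≤ e + 1 ∧ correlated W' W)).card : ℤ) := by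
      exact_mod_cast e2
    have X1 : ∑ i ∈ range (e + 2), ((n - 1).choose i : ℤ) * 3 ^ i
        = ∑ i ∈ range (e + 1), ((n - 1).choose i : ℤ) * 3 ^ i
          + ((n - 1).choose (e + 1) : ℤ) * 3 ^ (e + 1) :=
      Finset.sum_range_succ _ _
    have X2 : ∑ i ∈ range (e + 2), ((n - 2).choose i : ℤ) * 3 ^ i
        = (∑ i ∈ range e, ((n - 2).choose i : ℤ) * 3 ^ i
          + ((n - 2).choose e : ℤ) * 3 ^ e)
          + ((n - 2).choose (e + 1) : ℤ) * 3 ^ (e + 1) := by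
      rw [Finset.sum_range_succ, Finset.sum_range_succ]
    have pasz : ((n - 1).choose (e + 1) : ℤ)
        = ((n - 2).choose e : ℤ) + ((n - 2).choose (e + 1) : ℤ) := by
      exact_mod_cast pas
    nlinarith [e1z, e2z, X1, X2, pasz, hpow, mul_nonneg ha0 h3e, mul_nonneg hb0 h3e]
  · -- ends distinct
    have hc0 : W i1 ≠ W i0 := fun h => hW h.symm
    have cA : (univ.filter fun g : Fin n → Fin 4 =>
        hammingDist g W ≤ e + 1 ∧ g i0 = W i1).card
          = ∑ i ∈ range (e + 1), (n - 1).choose i * 3 ^ i := by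
      have h := pinned_card_ne W i0 (W i1) hc0 (e + 1) hd1
      simpa using h
    have cB : (univ.filter fun g : Fin n → Fin 4 =>
        hammingDist g W ≤ e + 1 ∧ g i1 = W i0).card
          = ∑ i ∈ range (e + 1), (n - 1).choose i * 3 ^ i := by
      have h := pinned_card_ne W i1 (W i0) hW (e + 1) hd1
      simpa using h
    have cAB : (univ.filter fun g : Fin n → Fin 4 =>
        hammingDist g W ≤ e + 1 ∧ g i0 = W i1 ∧ g i1 = W i0).card
          = ∑ i ∈ range e, (n - 2).choose i * 3 ^ i := by
      have h := pinned2_card_ne W i0 i1 hne10 (W i1) (W i0) hc0 hW (e + 1) hd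
      simpa using h
    rw [cA, cB, cAB] at e1
    have e1z : ((((univ.filter fun g : Fin n → Fin 4 =>
          hammingDist g W ≤ e + 1 ∧ g i0 = W i1)
        ∪ (univ.filter fun g : Fin n → Fin 4 =>
          hammingDist g W ≤ e + 1 ∧ g i1 = W i0)).card : ℤ))
          + ∑ i ∈ range e, ((n - 2).choose i : ℤ) * 3 ^ i
        = ∑ i ∈ range (e + 1), ((n - 1).choose i : ℤ) * 3 ^ i
          + ∑ i ∈ range (e + 1), ((n - 1).choose i : ℤ) * 3 ^ i := by
      exact_mod_cast e1
    have e2z : ((((univ.filter fun g : Fin n → Fin 4 =>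
          hammingDist g W ≤ e + 1 ∧ g i0 = W i1)
        ∪ (univ.filter fun g : Fin n → Fin 4 =>
          hammingDist g W ≤ e + 1 ∧ g i1 = W i0)).card : ℤ))
        ≤ ((univ.filter (fun W' : Fin n → Fin 4 =>
          hammingDist W' W ≤ e + 1 ∧ correlated W' W)).card : ℤ) := by
      exact_mod_cast e2
    linarith
end

section
/- Any word W of length n ≥ 2 over a 4-letter alphabet has at least 2·4^{n-1} − 4^{n-2} words (of length n) correlated with it; consequently, the maximum size u(n) of a set of pairwise mutually uncorrelated words of length n over a 4-letter alphabet satisfies u(n) ≤ 9·4^{n-2}. -/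
/-- A set of words is mutually uncorrelated if each word is self-uncorrelated and
no nonempty prefix of one word equals a suffix of another. -/
def mutUncorrF {n : ℕ} (S : Finset (Fin n → Fin 4)) : Prop :=
  (∀ X ∈ S, ∀ k : ℕ, 0 < k → k < n → ¬ prefEqSuff X X k) ∧
  ∀ X ∈ S, ∀ Y ∈ S, X ≠ Y → ∀ k : ℕ, 0 < k → k ≤ n → ¬ prefEqSuff X Y k

open Finset in
/-- Counting words avoiding two single-letter constraints at distinct positions. -/
lemma count_ne_ne {n : ℕ} (a b : Fin n) (hab : a ≠ b) (c d : Fin 4) :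
    (univ.filter (fun f : Fin n → Fin 4 => f a ≠ c ∧ f b ≠ d)).card = 9 * 4 ^ (n - 2) := by
  classical
  set t : Fin n → Finset (Fin 4) :=
    fun i => if i = a then univ.filter (· ≠ c) else if i = b then univ.filter (· ≠ d) else univ
    with ht
  have hset : (univ.filter (fun f : Fin n → Fin 4 => f a ≠ c ∧ f b ≠ d)) = Fintype.piFinset t := by
    ext f
    simp only [mem_filter, mem_univ, true_and, Fintype.mem_piFinset, ht]
    constructor
    · rintro ⟨h1, h2⟩ i
      split_ifs with h h'
      · subst h; simpa using h1
      · subst h'; simpa using h2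
      · simp
    · intro h
      refine ⟨?_, ?_⟩
      · have := h a; simpa using this
      · have := h b; simp [hab.symm] at this; simpa using this
  rw [hset, Fintype.card_piFinset]
  have hga : (t a).card = 3 := by
    simp [ht, Finset.filter_ne' , Finset.card_erase_of_mem]
  have hgb : (t b).card = 3 := by
    simp [ht, hab.symm, Finset.filter_ne', Finset.card_erase_of_mem]
  have hmem : b ∈ univ.erase a := by simp [Ne.symm hab]
  rw [← Finset.mul_prod_erase univ _ (mem_univ a), ← Finset.mul_prod_erase _ _ hmem]
  have hrest : ∏ i ∈ (univ.erase a).erase b, (t i).card = 4 ^ (n - 2) := by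
    rw [Finset.prod_congr rfl (fun i hi => ?_), Finset.prod_const]
    · congr 1
      rw [Finset.card_erase_of_mem hmem, Finset.card_erase_of_mem (mem_univ a)]
      simp only [Finset.card_univ, Fintype.card_fin]; omega
    · simp only [mem_erase] at hi
      simp [ht, hi.1, hi.2.1]
  rw [hga, hgb, hrest]; ring

/-- A prefix/suffix match of length 1 is just first letter = last letter. -/
lemma pes_one {n : ℕ} (hn : 1 ≤ n) (X Y : Fin n → Fin 4) :
    prefEqSuff X Y 1 ↔ X ⟨0, by omega⟩ = Y ⟨n - 1, by omega⟩ := by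
  constructor
  · intro h
    exact h ⟨0, by omega⟩ (by simp) ⟨n - 1, by omega⟩ (by simp)
  · intro h i hi j hj
    have hi0 : i = ⟨0, by omega⟩ := Fin.ext (by simpa using Nat.lt_one_iff.mp hi)
    have hj0 : j = ⟨n - 1, by omega⟩ := Fin.ext (by simp at hj ⊢; omega)
    rw [hi0, hj0]; exact h

open Finset in
open scoped Classical in
/-- Any word of length `n ≥ 2` over a 4-letter alphabet has at least
`2·4^{n-1} − 4^{n-2}` words correlated with it, and consequently any mutually
uncorrelated set of words of length `n` has size at most `9·4^{n-2}`. -/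
theorem stmt2 (n : ℕ) (hn : 2 ≤ n) :
    (∀ W : Fin n → Fin 4,
      2 * 4 ^ (n - 1) - 4 ^ (n - 2) ≤
        (univ.filter (fun W' : Fin n → Fin 4 => correlated W' W)).card) ∧
    ∀ S : Finset (Fin n → Fin 4), mutUncorrF S → S.card ≤ 9 * 4 ^ (n - 2) := by
  have h0 : (0 : ℕ) < n := by omega
  have h1 : n - 1 < n := by omega
  set p0 : Fin n := ⟨0, h0⟩ with hp0
  set p1 : Fin n := ⟨n - 1, h1⟩ with hp1
  have hp : p0 ≠ p1 := by
    intro h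
    have := congrArg Fin.val h
    simp [hp0, hp1] at this
    omega
  have hcard : ∀ c d : Fin 4,
      (univ.filter (fun f : Fin n → Fin 4 => f p0 ≠ c ∧ f p1 ≠ d)).card = 9 * 4 ^ (n - 2) :=
    fun c d => count_ne_ne p0 p1 hp c d
  constructor
  · intro W
    have hsub : univ \ (univ.filter (fun f : Fin n → Fin 4 => f p0 ≠ W p1 ∧ f p1 ≠ W p0)) ⊆
        univ.filter (fun W' : Fin n → Fin 4 => correlated W' W) := by
      intro f hf
      simp only [mem_sdiff, mem_univ, true_and, mem_filter, not_and_or, not_not] at hf ⊢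
      refine ⟨1, one_pos, by omega, ?_⟩
      rcases hf with h | h
      · left; exact (pes_one (by omega) f W).mpr h
      · right; exact (pes_one (by omega) W f).mpr h.symm
    have hdiff : (univ \ (univ.filter
        (fun f : Fin n → Fin 4 => f p0 ≠ W p1 ∧ f p1 ≠ W p0))).card
        = 4 ^ n - 9 * 4 ^ (n - 2) := by
      rw [card_sdiff_of_subset (subset_univ _), hcard, card_univ]
      congr 1
      simp [Fintype.card_fun]
    have hle := card_le_card hsub
    rw [hdiff] at hle
    refine le_trans ?_ hle
    clear hsub hdiff hcard hp hp0 hp1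
    obtain ⟨m, hm⟩ : ∃ m, n = m + 2 := ⟨n - 2, by omega⟩
    have e1 : n - 1 = m + 1 := by omega
    have e2 : n - 2 = m := by omega
    rw [e1, e2, hm, pow_succ, pow_succ, pow_succ]
    omega
  · intro S hS
    rcases S.eq_empty_or_nonempty with rfl | ⟨X, hX⟩
    · simp
    · have hsub : S ⊆ univ.filter (fun f : Fin n → Fin 4 => f p0 ≠ X p1 ∧ f p1 ≠ X p0) := by
        intro Y hY
        simp only [mem_filter, mem_univ, true_and]
        by_cases hXY : Y = X
        · subst hXY
          have hself := hS.1 Y hY 1 one_pos (by omega)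
          rw [pes_one (by omega)] at hself
          exact ⟨hself, fun h => hself h.symm⟩
        · refine ⟨?_, ?_⟩
          · have h2 := hS.2 Y hY X hX hXY 1 one_pos (by omega)
            rw [pes_one (by omega)] at h2; exact h2
          · have h2 := hS.2 X hX Y hY (Ne.symm hXY) 1 one_pos (by omega)
            rw [pes_one (by omega)] at h2
            exact fun h => h2 h.symm
      calc S.card ≤ _ := card_le_card hsub
        _ = 9 * 4 ^ (n - 2) := hcard _ _
end

section
/- If A and B are disjoint sets of words of length n such that A ∪ B is mutually uncorrelated, then the set C = {XY : X ∈ A, Y ∈ B} of concatenations is a mutually uncorrelated set of words of length 2n. -/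
/-- A word `X` is self-uncorrelated if no proper nonempty prefix of `X`
is also a suffix of `X`. -/
def selfUncorr {α : Type*} (X : List α) : Prop :=
  ∀ k : ℕ, 0 < k → k < X.length → X.take k ≠ X.drop (X.length - k)

/-- A set of words is mutually uncorrelated if each word is self-uncorrelated and
for any two distinct words, no nonempty prefix of one equals a suffix of the other. -/
def mutUncorr {α : Type*} (S : Set (List α)) : Prop :=
  (∀ X ∈ S, selfUncorr X) ∧
  ∀ X ∈ S, ∀ Y ∈ S, X ≠ Y →
    ∀ k : ℕ, 0 < k → k ≤ X.length → k ≤ Y.length →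
      X.take k ≠ Y.drop (Y.length - k)

/-! Since all words of `C` have length `2n`, only overlaps of length `0 < k < 2n` between
`X₁Y₁` and `X₂Y₂` must be excluded. If `k ≤ n` such an overlap is one of the prefix `X₁ ∈ A`
with the suffix `Y₂ ∈ B`, two words of `A ∪ B` that are distinct since `A` and `B` are disjoint.
If `k = n + j` with `0 < j < n`, its first `j` letters form a proper overlap of `X₁` with `X₂`. -/

section

variable {α : Type*}

namespace List

theorem drop_length_sub_append_of_le_length {X Y : List α} {k : ℕ} (hk : k ≤ Y.length) :
    (X ++ Y).drop ((X ++ Y).length - k) = Y.drop (Y.length - k) := by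
  rw [length_append, show X.length + Y.length - k = X.length + (Y.length - k) by omega,
    drop_length_add_append]

theorem drop_length_sub_append_of_length_le {X Y : List α} {k : ℕ} (hk : Y.length ≤ k)
    (hkX : k ≤ X.length + Y.length) :
    (X ++ Y).drop ((X ++ Y).length - k) = X.drop (X.length - (k - Y.length)) ++ Y := by
  rw [length_append, show X.length + Y.length - k = X.length - (k - Y.length) by omega,
    drop_append_of_le_length (by omega)]

end List

open List

theorem mutUncorr.take_ne_drop {S : Set (List α)} (hS : mutUncorr S) {X Y : List α}
    (hX : X ∈ S) (hY : Y ∈ S) {k : ℕ} (hk : 0 < k) (hkX : k ≤ X.length) (hkY : k ≤ Y.length)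
    (hXY : X ≠ Y ∨ k < X.length) :
    X.take k ≠ Y.drop (Y.length - k) := by
  by_cases hne : X = Y
  · subst hne
    exact hS.1 X hX k hk (hXY.resolve_left (not_not.2 rfl))
  · exact hS.2 X hX Y hY hne k hk hkX hkY

theorem mutUncorr_of_length_eq {S : Set (List α)} {m : ℕ} (hS : ∀ Z ∈ S, Z.length = m)
    (h : ∀ X ∈ S, ∀ Y ∈ S, ∀ k, 0 < k → k < m → X.take k ≠ Y.drop (Y.length - k)) :
    mutUncorr S := by
  refine ⟨fun X hX k hk hkX => h X hX X hX k hk (hS X hX ▸ hkX), ?_⟩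
  intro X hX Y hY hne k hk hkX hkY
  rcases (hS X hX ▸ hkX).lt_or_eq with hkm | rfl
  · exact h X hX Y hY k hk hkm
  · rwa [take_of_length_le (hS X hX).le, hS Y hY, Nat.sub_self, drop_zero]

theorem mutUncorr.append_take_ne_drop {S : Set (List α)} (hS : mutUncorr S) {n : ℕ}
    {X₁ X₂ Y₂ : List α} (Y₁ : List α) (hX₁ : X₁ ∈ S) (hX₂ : X₂ ∈ S) (hY₂ : Y₂ ∈ S)
    (hX₁Y₂ : X₁ ≠ Y₂) (hX₁l : X₁.length = n) (hX₂l : X₂.length = n) (hY₂l : Y₂.length = n)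
    {k : ℕ} (hk : 0 < k) (hk2n : k < 2 * n) :
    (X₁ ++ Y₁).take k ≠ (X₂ ++ Y₂).drop ((X₂ ++ Y₂).length - k) := by
  intro H
  rcases le_or_gt k n with hkn | hnk
  · rw [take_append_of_le_length (by omega), drop_length_sub_append_of_le_length (by omega)] at H
    exact hS.take_ne_drop hX₁ hY₂ hk (by omega) (by omega) (.inl hX₁Y₂) H
  · have hprefix : ((X₁ ++ Y₁).take k).take (k - n) = X₁.take (k - n) := by
      rw [take_take, min_eq_left (by omega), take_append_of_le_length (by omega)]
    have hsuffix : ((X₂ ++ Y₂).drop ((X₂ ++ Y₂).length - k)).take (k - n) =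
        X₂.drop (X₂.length - (k - n)) := by
      rw [drop_length_sub_append_of_length_le (by omega) (by omega), hY₂l,
        take_append_of_le_length (by rw [length_drop]; omega),
        take_of_length_le (by rw [length_drop]; omega)]
    exact hS.take_ne_drop (k := k - n) hX₁ hX₂ (by omega) (by omega) (by omega)
      (.inr (by omega)) (by rw [← hprefix, H, hsuffix])

end

/-- If `A` and `B` are disjoint sets of words of length `n` with `A ∪ B` mutually
uncorrelated, the set of concatenations `{XY : X ∈ A, Y ∈ B}` is a mutually
uncorrelated set of words of length `2n`. -/
theorem stmt3 {α : Type*} (n : ℕ) (A B : Set (List α)) (hd : Disjoint A B)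
    (hlen : ∀ X ∈ A ∪ B, X.length = n) (h : mutUncorr (A ∪ B)) :
    (∀ Z ∈ {Z : List α | ∃ X ∈ A, ∃ Y ∈ B, Z = X ++ Y}, Z.length = 2 * n) ∧
    mutUncorr {Z : List α | ∃ X ∈ A, ∃ Y ∈ B, Z = X ++ Y} := by
  have hC : ∀ Z ∈ {Z : List α | ∃ X ∈ A, ∃ Y ∈ B, Z = X ++ Y}, Z.length = 2 * n := by
    rintro _ ⟨X, hX, Y, hY, rfl⟩
    rw [List.length_append, hlen X (.inl hX), hlen Y (.inr hY), two_mul]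
  refine ⟨hC, mutUncorr_of_length_eq hC ?_⟩
  rintro _ ⟨X₁, hX₁, Y₁, -, rfl⟩ _ ⟨X₂, hX₂, Y₂, hY₂, rfl⟩ k hk hk2n
  exact h.append_take_ne_drop Y₁ (.inl hX₁) (.inl hX₂) (.inr hY₂) (hd.ne_of_mem hX₁ hY₂)
    (hlen X₁ (.inl hX₁)) (hlen X₂ (.inl hX₂)) (hlen Y₂ (.inr hY₂)) hk hk2n
end

section
/- Let u(n) denote the largest size of a mutually uncorrelated set of words of length n over a 4-letter alphabet. Then u(2n) ≥ u(n)²/4 whenever u(n) is even (more generally, u(2n) ≥ ⌊u(n)/2⌋·⌈u(n)/2⌉). -/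
/-!
Split `S` into disjoint halves `A` and `B` and take all concatenations `ab`. An overlap of
length `k < 2n` between a prefix of `ab` and a suffix of `cd` either lies within `a` and `d`,
which is excluded because `a ≠ d`, or covers `d` and ends inside `b`; its first `k - n` letters
then match a prefix of `a` with a suffix of `c`. Since all words of `A` have length `n`, distinct
pairs give distinct concatenations, so `|A| |B|` words result.
-/

namespace mutUncorr

variable {α : Type*} {n : ℕ} {S : Set (List α)}

theorem take_ne_drop_s4 (h : mutUncorr S) (hlen : ∀ X ∈ S, X.length = n) {X Y : List α}
    (hX : X ∈ S) (hY : Y ∈ S) {k : ℕ} (hk0 : 0 < k) (hkn : k ≤ n) (hne : X ≠ Y ∨ k < n) :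
    X.take k ≠ Y.drop (n - k) := by
  rcases eq_or_ne X Y with rfl | hXY
  · simpa [hlen X hX] using h.1 X hX k hk0 (by grind)
  · simpa [hlen Y hY] using h.2 X hX Y hY hXY k hk0 (by grind) (by grind)

theorem append_take_ne_append_drop (h : mutUncorr S) (hlen : ∀ X ∈ S, X.length = n)
    {a b c d : List α} (ha : a ∈ S) (hc : c ∈ S) (hd : d ∈ S) (had : a ≠ d)
    {k : ℕ} (hk0 : 0 < k) (hk : k < 2 * n) :
    (a ++ b).take k ≠ (c ++ d).drop (2 * n - k) := by
  have hla := hlen a ha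
  have hlc := hlen c hc
  rcases le_or_gt k n with hkn | hnk
  · have hsuffix : (c ++ d).drop (2 * n - k) = d.drop (n - k) := by
      rw [List.drop_append, List.drop_of_length_le (by omega), hlc]
      grind
    rw [List.take_append_of_le_length (by omega), hsuffix]
    exact h.take_ne_drop_s4 hlen ha hd hk0 hkn (.inl had)
  · intro heq
    have hsuffix : (c ++ d).drop (2 * n - k) = c.drop (n - (k - n)) ++ d := by
      rw [List.drop_append_of_le_length (by omega)]
      congr 2
      omega
    have hoverlap : a.take (k - n) = c.drop (n - (k - n)) := by
      have := congrArg (List.take (k - n)) heq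
      rwa [List.take_take, Nat.min_eq_left (by omega), List.take_append_of_le_length (by omega),
        hsuffix, List.take_left' (l₁ := c.drop _) (by simp; omega)] at this
    exact h.take_ne_drop_s4 hlen ha hc (by omega) (by omega) (.inr (by omega)) hoverlap

theorem image2_append (h : mutUncorr S) (hlen : ∀ X ∈ S, X.length = n) {A B : Set (List α)}
    (hA : A ⊆ S) (hB : B ⊆ S) (hAB : Disjoint A B) :
    mutUncorr (Set.image2 (· ++ ·) A B) := by
  have hlen₂ : ∀ a ∈ A, ∀ b ∈ B, (a ++ b).length = 2 * n := fun a ha b hb => by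
    rw [List.length_append, hlen a (hA ha), hlen b (hB hb), two_mul]
  refine ⟨?_, ?_⟩
  · rintro _ ⟨a, ha, b, hb, rfl⟩ k hk0 hk
    rw [hlen₂ a ha b hb] at hk ⊢
    exact h.append_take_ne_append_drop hlen (hA ha) (hA ha) (hB hb) (hAB.ne_of_mem ha hb) hk0 hk
  · rintro _ ⟨a, ha, b, hb, rfl⟩ _ ⟨c, hc, d, hd, rfl⟩ hne k hk0 - hk
    rw [hlen₂ c hc d hd] at hk ⊢
    rcases hk.lt_or_eq with hk | rfl
    · exact h.append_take_ne_append_drop hlen (hA ha) (hA hc) (hB hd) (hAB.ne_of_mem ha hd) hk0 hk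
    · rwa [Nat.sub_self, List.drop_zero, ← hlen₂ a ha b hb, List.take_length]

end mutUncorr

theorem Finset.card_image₂_append {α : Type*} [DecidableEq α] {n : ℕ} {A B : Finset (List α)}
    (hA : ∀ a ∈ A, a.length = n) : (image₂ (· ++ ·) A B).card = A.card * B.card :=
  card_image₂_iff.2 fun _ hab _ hcd heq =>
    Prod.ext_iff.2 <| List.append_inj heq <| (hA _ (Set.mem_prod.1 hab).1).trans
      (hA _ (Set.mem_prod.1 hcd).1).symm

/-- From any mutually uncorrelated set `S` of words of length `n` over a 4-letter
alphabet one obtains a mutually uncorrelated set of words of length `2n` of size at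
least `⌊|S|/2⌋·⌈|S|/2⌉`; in particular `u(2n) ≥ u(n)²/4` when `u(n)` is even. -/
theorem stmt4 (n : ℕ) (S : Finset (List (Fin 4))) (hlen : ∀ X ∈ S, X.length = n)
    (h : mutUncorr (↑S : Set (List (Fin 4)))) :
    ∃ T : Finset (List (Fin 4)), (∀ Z ∈ T, Z.length = 2 * n) ∧
      mutUncorr (↑T : Set (List (Fin 4))) ∧
      S.card / 2 * ((S.card + 1) / 2) ≤ T.card := by
  obtain ⟨A, hAS, hA⟩ := Finset.exists_subset_card_eq (Nat.div_le_self S.card 2)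
  refine ⟨Finset.image₂ (· ++ ·) A (S \ A), ?_, ?_, ?_⟩
  · simp only [Finset.mem_image₂, Finset.mem_sdiff]
    rintro _ ⟨a, ha, b, ⟨hb, -⟩, rfl⟩
    rw [List.length_append, hlen a (hAS ha), hlen b hb, two_mul]
  · rw [Finset.coe_image₂, Finset.coe_sdiff]
    exact h.image2_append hlen (Finset.coe_subset.2 hAS) Set.sdiff_subset Set.disjoint_sdiff_right
  · rw [Finset.card_image₂_append fun a ha => hlen a (hAS ha), Finset.card_sdiff_of_subset hAS, hA]
    exact Nat.mul_le_mul_left _ (by omega)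
end

section
/- For every n divisible by 4, the largest mutually uncorrelated set of words of length n over a 4-letter alphabet has size at least 4·3^{n/4}. -/
lemma key_ne (lx ly : List (Fin 4)) (hly : ∀ a ∈ ly, a ≠ 3)
    (k : ℕ) (hk : 0 < k) (hk2 : k < ((3 : Fin 4) :: ly).length) :
    ((3 : Fin 4) :: lx).take k ≠ ((3 : Fin 4) :: ly).drop (((3 : Fin 4) :: ly).length - k) := by
  intro heq
  have h3 : (3 : Fin 4) ∈ ((3 : Fin 4) :: lx).take k := by
    obtain ⟨k', rfl⟩ := Nat.exists_eq_succ_of_ne_zero hk.ne'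
    simp [List.take_cons]
  rw [heq] at h3
  simp only [List.length_cons] at hk2
  obtain ⟨m, hm⟩ := Nat.exists_eq_succ_of_ne_zero (by omega : ly.length + 1 - k ≠ 0)
  simp only [List.length_cons, hm, List.drop_succ_cons] at h3
  exact hly _ (List.mem_of_mem_drop h3) rfl

lemma card_bound (m : ℕ) (hm : 0 < m) : 4 * 3 ^ m ≤ 3 ^ (4 * m - 1) := by
  have h1 : 4 * m - 1 = (3 * m - 1) + m := by omega
  rw [h1, pow_add]
  apply Nat.mul_le_mul_right
  calc 4 ≤ 3 ^ 2 := by norm_num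
    _ ≤ 3 ^ (3 * m - 1) := Nat.pow_le_pow_right (by norm_num) (by omega)


/-- For every positive `n` divisible by 4 there is a mutually uncorrelated set of
words of length `n` over a 4-letter alphabet of size at least `4·3^{n/4}`. -/
theorem stmt6 (n : ℕ) (hpos : 0 < n) (hdvd : 4 ∣ n) :
    ∃ S : Finset (List (Fin 4)), (∀ X ∈ S, X.length = n) ∧
      mutUncorr (↑S : Set (List (Fin 4))) ∧ 4 * 3 ^ (n / 4) ≤ S.card := by
  classical
  set g : Fin 3 → Fin 4 := Fin.castLE (by norm_num) with hg
  have hginj : Function.Injective g := Fin.castLE_injective _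
  have hg3 : ∀ b : Fin 3, g b ≠ 3 := by
    intro b h
    have hb := b.isLt
    have h2 : (g b).val = 3 := by rw [h]; rfl
    simp only [hg, Fin.coe_castLE] at h2
    omega
  set F : (Fin (n-1) → Fin 3) → List (Fin 4) :=
    fun f => (3 : Fin 4) :: (List.ofFn f).map g with hF
  have hFinj : Function.Injective F := by
    intro f1 f2 h
    simp only [hF, List.cons.injEq, true_and] at h
    exact List.ofFn_injective (List.map_injective_iff.mpr hginj h)
  have hmem : ∀ f : Fin (n-1) → Fin 3, ∀ a ∈ (List.ofFn f).map g, a ≠ (3 : Fin 4) := by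
    intro f a ha
    simp only [List.mem_map] at ha
    obtain ⟨b, _, rfl⟩ := ha
    exact hg3 b
  have hlen : ∀ f : Fin (n-1) → Fin 3, (F f).length = n := by
    intro f
    simp only [hF, List.length_cons, List.length_map, List.length_ofFn]
    omega
  refine ⟨Finset.univ.image F, ?_, ⟨?_, ?_⟩, ?_⟩
  · intro X hX
    simp only [Finset.mem_image] at hX
    obtain ⟨f, _, rfl⟩ := hX
    exact hlen f
  · intro X hX
    simp only [Finset.coe_image, Set.mem_image] at hX
    obtain ⟨f, _, rfl⟩ := hX
    intro k hk hk2
    exact key_ne _ _ (hmem f) k hk hk2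
  · intro X hX Y hY hXY k hk hkX hkY
    simp only [Finset.coe_image, Set.mem_image] at hX hY
    obtain ⟨f, _, rfl⟩ := hX
    obtain ⟨f', _, rfl⟩ := hY
    rcases lt_or_eq_of_le hkY with h | h
    · exact key_ne _ _ (hmem f') k hk h
    · rw [h, Nat.sub_self, List.drop_zero]
      have he : (F f').length = (F f).length := by rw [hlen, hlen]
      rw [he, List.take_length]
      exact hXY
  · rw [Finset.card_image_of_injective _ hFinj, Finset.card_univ, Fintype.card_fun,
      Fintype.card_fin, Fintype.card_fin]
    obtain ⟨m, rfl⟩ := hdvd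
    have hm : 0 < m := by omega
    have : 4 * m / 4 = m := by omega
    rw [this]
    exact card_bound m hm
end

section
/- Let {X_1,...,X_m} be mutually uncorrelated words of length n over a 4-letter alphabet. Let f(N) count words of length N avoiding all X_i as substrings, and let f_i(N) count words of length N that contain exactly one occurrence of any X_j among X_1,...,X_m, that occurrence being of X_i at the right end (as a suffix). Then f(N) = f_i(N+n) for every i and every N ≥ 0. -/
/-- Key combinatorial lemma: if `u` avoids every pattern in `S`, then the only
occurrence of a pattern in `u ++ Xi` is the occurrence of `Xi` at the right end. -/
lemma key_occ {n : ℕ} (S : Finset (List (Fin 4)))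
    (hlen : ∀ X ∈ S, X.length = n) (h : mutUncorr (↑S : Set (List (Fin 4))))
    (Xi : List (Fin 4)) (hXi : Xi ∈ S)
    (u : List (Fin 4)) (hu : ∀ X ∈ S, ¬ X <:+: u) :
    ∀ Y ∈ S, ∀ s t : List (Fin 4), u ++ Xi = s ++ Y ++ t → Y = Xi ∧ t = [] := by
  intro Y hY s t heq
  have hXin : Xi.length = n := hlen Xi hXi
  have hYn : Y.length = n := hlen Y hY
  have hlen' : u.length = s.length + t.length := by
    have := congrArg List.length heq
    simp [hXin, hYn] at this
    omega
  rcases eq_or_ne t [] with ht | ht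
  · subst ht
    simp only [List.append_nil] at heq
    have := List.append_inj' heq (by omega)
    exact ⟨this.2.symm, rfl⟩
  · exfalso
    have ht0 : 0 < t.length := List.length_pos_iff.mpr ht
    rcases le_or_gt n t.length with hc | hc
    · -- Y would be an infix of u
      apply hu Y hY
      have h1 : s ++ Y <+: u ++ Xi := by
        rw [heq]
        exact (s ++ Y).prefix_append t
      have h2 : u <+: u ++ Xi := u.prefix_append Xi
      have hp : s ++ Y <+: u :=
        List.prefix_of_prefix_length_le h1 h2 (by simp [hYn]; omega)
      exact ((List.suffix_append s Y).isInfix.trans hp.isInfix)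
    · -- overlap: a nonempty proper prefix of Xi equals a suffix of Y
      set k := n - t.length with hk
      have hk0 : 0 < k := by omega
      have hA : u.drop s.length ++ Xi = Y ++ t := by
        have h1 := congrArg (List.drop s.length) heq
        rw [List.drop_append_of_le_length (by omega), List.append_assoc,
          List.drop_left] at h1
        exact h1
      have hXieq : Xi = Y.drop t.length ++ t := by
        have h1 := congrArg (List.drop t.length) hA
        rw [List.drop_left' (by simp; omega),
          List.drop_append_of_le_length (by omega)] at h1
        exact h1
      have hkey : Xi.take k = Y.drop (Y.length - k) := by
        rw [hXieq, List.take_left' (by simp; omega)]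
        congr 1
        omega
      rcases eq_or_ne Y Xi with hYXi | hYXi
      · subst hYXi
        exact h.1 Y (by exact_mod_cast hY) k hk0 (by omega) hkey
      · exact h.2 Xi (by exact_mod_cast hXi) Y (by exact_mod_cast hY)
          (Ne.symm hYXi) k hk0 (by omega) (by omega) hkey

open scoped Classical in
/-- `f(N) = f_i(N+n)`: the number of length-`N` words avoiding all patterns equals
the number of length-`(N+n)` words whose unique pattern occurrence is `Xi` as a
suffix. -/
theorem stmt8 (n : ℕ) (hn : 0 < n) (S : Finset (List (Fin 4)))
    (hlen : ∀ X ∈ S, X.length = n) (h : mutUncorr (↑S : Set (List (Fin 4))))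
    (Xi : List (Fin 4)) (hXi : Xi ∈ S) (N : ℕ) :
    (Finset.univ.filter
      (fun w : Fin N → Fin 4 => ∀ X ∈ S, ¬ X <:+: List.ofFn w)).card =
    (Finset.univ.filter
      (fun w : Fin (N + n) → Fin 4 =>
        Xi <:+ List.ofFn w ∧
        ∀ Y ∈ S, ∀ s t : List (Fin 4),
          List.ofFn w = s ++ Y ++ t → Y = Xi ∧ t = [])).card := by
  have hXin : Xi.length = n := hlen Xi hXi
  -- the last block, as a function
  set b : Fin n → Fin 4 := fun j => Xi.get (Fin.cast hXin.symm j) with hb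
  have hofb : List.ofFn b = Xi := by
    subst hXin
    simp [hb, Fin.cast]
  apply Finset.card_bij (fun w _ => Fin.append w b)
  · intro w hw
    simp only [Finset.mem_filter, Finset.mem_univ, true_and] at hw ⊢
    rw [List.ofFn_fin_append, hofb]
    refine ⟨List.suffix_append _ _, ?_⟩
    exact key_occ S hlen h Xi hXi (List.ofFn w) hw
  · intro w1 _ w2 _ heq
    have h1 := congrArg List.ofFn heq
    rw [List.ofFn_fin_append, List.ofFn_fin_append, hofb] at h1
    exact List.ofFn_injective (List.append_inj_left h1 (by simp))
  · intro v hv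
    simp only [Finset.mem_filter, Finset.mem_univ, true_and] at hv
    obtain ⟨⟨u, hu⟩, huniq⟩ := hv
    have hulen : u.length = N := by
      have := congrArg List.length hu
      simp [hXin] at this
      omega
    refine ⟨fun j => u.get (Fin.cast hulen.symm j), ?_, ?_⟩
    · simp only [Finset.mem_filter, Finset.mem_univ, true_and]
      have hofu : List.ofFn (fun j : Fin N => u.get (Fin.cast hulen.symm j)) = u := by
        subst hulen
        simp [Fin.cast]
      rw [hofu]
      intro X hX hinf
      obtain ⟨s, t, hst⟩ := hinf
      have : X = Xi ∧ t ++ Xi = [] := by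
        apply huniq X hX s (t ++ Xi)
        rw [← hu, ← hst]
        simp [List.append_assoc]
      have hXi0 : Xi ≠ [] := by
        intro hcon; rw [hcon] at hXin; simp at hXin; omega
      exact hXi0 (List.append_eq_nil_iff.mp this.2).2
    · apply List.ofFn_injective
      rw [List.ofFn_fin_append, hofb]
      have hofu : List.ofFn (fun j : Fin N => u.get (Fin.cast hulen.symm j)) = u := by
        subst hulen
        simp [Fin.cast]
      rw [hofu, hu]
end

section
/- If X and Y are words of the same length n and X ≠ Y, then the concatenation Z = XY is not a square overlap of itself in the sense that the prefix of Z of length n differs from the suffix of Z of length n; moreover, if {X, Y} is mutually uncorrelated, then Z = XY is self-uncorrelated. -/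
namespace List

variable {α : Type*}

theorem take_eq_drop_of_border_append_of_le {X Y : List α} {k : ℕ}
    (hX : k ≤ X.length) (hY : k ≤ Y.length)
    (h : (X ++ Y).take k = (X ++ Y).drop ((X ++ Y).length - k)) :
    X.take k = Y.drop (Y.length - k) := by
  rwa [take_append_of_le_length hX, drop_length_sub_append_of_le_length hY] at h

/-- The first `j` letters of both sides of such a border lie inside `X`. -/
theorem take_eq_drop_of_border_append_add_length {X Y : List α} {j : ℕ} (hj : j ≤ X.length)
    (h : (X ++ Y).take (j + Y.length) = (X ++ Y).drop ((X ++ Y).length - (j + Y.length))) :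
    X.take j = X.drop (X.length - j) := by
  have hprefix := congrArg (take j) h
  rwa [take_take, min_eq_left (by omega), take_append_of_le_length hj, length_append,
    show X.length + Y.length - (j + Y.length) = X.length - j by omega,
    drop_append_of_le_length (by omega), take_left' (by simp; omega)] at hprefix

end List

/-- If `X ≠ Y` are words of length `n`, then the prefix of length `n` of `Z = XY`
differs from its suffix of length `n`; moreover, if `{X,Y}` is mutually
uncorrelated, then `Z = XY` is self-uncorrelated. -/
theorem stmt16 {α : Type*} (n : ℕ) (X Y : List α)
    (hX : X.length = n) (hY : Y.length = n) (hne : X ≠ Y) :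
    (X ++ Y).take n ≠ (X ++ Y).drop n ∧
    (mutUncorr ({X, Y} : Set (List α)) → selfUncorr (X ++ Y)) := by
  have hZ : (X ++ Y).length = n + n := by simp [hX, hY]
  have hhalves : (X ++ Y).take n ≠ (X ++ Y).drop n := by
    rwa [List.take_left' hX, List.drop_left' hX]
  refine ⟨hhalves, ?_⟩
  rintro ⟨hself, hcross⟩ k hk hkZ hborder
  rcases lt_trichotomy k n with hlt | rfl | hgt
  · exact hcross X (by simp) Y (by simp) hne k hk (by omega) (by omega)
      (List.take_eq_drop_of_border_append_of_le (by omega) (by omega) hborder)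
  · exact hhalves (by rwa [hZ, Nat.add_sub_cancel] at hborder)
  · obtain ⟨j, rfl⟩ : ∃ j, k = j + Y.length := ⟨k - n, by omega⟩
    exact hself X (by simp) j (by omega) (by omega)
      (List.take_eq_drop_of_border_append_add_length (by omega) hborder)
end
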